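/- arXiv:2507.16747 — 5 statements merged into one kernel-verified Lean document; each statement's English description precedes it below -/
import Mathlib

section
/- For any finite words w and w' in the generators σ₁, σ₂ of the 3-strand braid group B₃ such that w' is a subword of w (a not-necessarily-contiguous subsequence), the element (∏w)·(∏w')⁻¹ ∈ B₃ is quasipositive. (This is the deletion principle underlying the 'if' direction of Orevkov's criterion as used in the paper: deleting letters from a positive word so that the deleted-to word equals δ exhibits (∏w)·δ⁻¹ as a product of conjugates of generators.) -/
/-- The braid relation σ₁σ₂σ₁ = σ₂σ₁σ₂ as a relator in the free group on two generators. -/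
def braidRel : Set (FreeGroup (Fin 2)) :=
  {FreeGroup.of 0 * FreeGroup.of 1 * FreeGroup.of 0 *
    (FreeGroup.of 1 * FreeGroup.of 0 * FreeGroup.of 1)⁻¹}

/-- The 3-strand braid group B₃. -/
abbrev B₃ := PresentedGroup braidRel

/-- The Artin generator σ₁. -/
def σ₁ : B₃ := PresentedGroup.of 0

/-- The Artin generator σ₂. -/
def σ₂ : B₃ := PresentedGroup.of 1

/-- The Garside element Δ = σ₁σ₂σ₁. -/
def Δ : B₃ := σ₁ * σ₂ * σ₁

/-- β ∈ B₃ is quasipositive if it is a finite product of conjugates of the generators. -/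
def Quasipositive (β : B₃) : Prop :=
  ∃ l : List (B₃ × B₃),
    (∀ p ∈ l, p.2 = σ₁ ∨ p.2 = σ₂) ∧
    β = (l.map fun p => p.1 * p.2 * p.1⁻¹).prod

/-! Deleting a letter `a` from a word changes `(∏ w) (∏ w')⁻¹` either by conjugation by `a`
(when `a` is kept in both words) or by conjugating by `a` and then multiplying by `a` on the
right (when `a` is deleted). So the quotient stays in any conjugation-invariant submonoid
containing the letters of `w`, and the quasipositive braids form such a submonoid. -/

theorem Submonoid.prod_mul_inv_prod_mem_of_sublist {G : Type*} [Group G] {S : Submonoid G}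
    (hS : ∀ g x, x ∈ S → g * x * g⁻¹ ∈ S) {w w' : List G} (hw : ∀ x ∈ w, x ∈ S)
    (h : w'.Sublist w) : w.prod * w'.prod⁻¹ ∈ S := by
  induction h with
  | slnil => simp
  | @cons w' w a _ ih =>
    have ih := ih fun x hx => hw x (List.mem_cons_of_mem a hx)
    rw [List.prod_cons, show a * w.prod * w'.prod⁻¹ = a * (w.prod * w'.prod⁻¹) * a⁻¹ * a by
      group]
    exact S.mul_mem (hS a _ ih) (hw a List.mem_cons_self)
  | @cons_cons w' w a _ ih =>
    have ih := ih fun x hx => hw x (List.mem_cons_of_mem a hx)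
    rw [List.prod_cons, List.prod_cons,
      show a * w.prod * (a * w'.prod)⁻¹ = a * (w.prod * w'.prod⁻¹) * a⁻¹ by group]
    exact hS a _ ih

theorem Quasipositive.of_eq_generator {x : B₃} (h : x = σ₁ ∨ x = σ₂) : Quasipositive x :=
  ⟨[(1, x)], by simpa using h, by simp⟩

theorem Quasipositive.conj {x : B₃} (g : B₃) (hx : Quasipositive x) :
    Quasipositive (g * x * g⁻¹) := by
  obtain ⟨l, hl, rfl⟩ := hx
  refine ⟨l.map fun p => (g * p.1, p.2), ?_, ?_⟩
  · intro q hq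
    obtain ⟨p, hp, rfl⟩ := List.mem_map.1 hq
    exact hl p hp
  · rw [← MulAut.conj_apply, map_list_prod, List.map_map, List.map_map]
    congr 1
    ext p
    simp [mul_assoc]

def quasipositiveSubmonoid : Submonoid B₃ where
  carrier := {β | Quasipositive β}
  one_mem' := ⟨[], by simp, by simp⟩
  mul_mem' := by
    rintro _ _ ⟨l, hl, rfl⟩ ⟨m, hm, rfl⟩
    exact ⟨l ++ m, fun p hp => (List.mem_append.1 hp).elim (hl p) (hm p), by simp⟩

/-- Deletion principle: if `w'` is a sublist of a positive word `w`, then `(∏ w) · (∏ w')⁻¹`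
is quasipositive. -/
theorem deletion_quasipositive (w w' : List B₃) (hw : ∀ x ∈ w, x = σ₁ ∨ x = σ₂)
    (hsub : w'.Sublist w) :
    Quasipositive (w.prod * w'.prod⁻¹) :=
  Submonoid.prod_mul_inv_prod_mem_of_sublist (S := quasipositiveSubmonoid)
    (fun g _ hx => hx.conj g) (fun x hx => Quasipositive.of_eq_generator (hw x hx)) hsub
end

section
/- The 3-braid σ₁²σ₂²σ₁²σ₂²·Δ⁻² is quasipositive, i.e., it is a finite product of conjugates of the generators σ₁, σ₂ in B₃. (This is the base case of the paper's proof of Proposition 4.1; it follows from Orevkov's criterion since deleting one σ₂ from each σ₂²-block of σ₁²σ₂²σ₁²σ₂² yields a word equal to Δ².) -/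
/-!
Write Δ² = x·y with x = y = σ₁²σ₂. Inserting one σ₂ after x and one after y gives
σ₁²σ₂²σ₁²σ₂², and any such insertion is quasipositive after dividing by x·y:
x s y t (xy)⁻¹ = (x s x⁻¹) · ((xy) t (xy)⁻¹). This is the two-letter case of Orevkov's criterion.
-/

theorem σ₁_mul_σ₂_mul_σ₁ : σ₁ * σ₂ * σ₁ = σ₂ * σ₁ * σ₂ := by
  have h := PresentedGroup.mk_eq_mk_of_mul_inv_mem (rels := braidRel) (Set.mem_singleton _)
  simp only [map_mul] at h
  exact h

theorem Δ_sq : Δ ^ 2 = σ₁ ^ 2 * σ₂ * (σ₁ ^ 2 * σ₂) :=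
  calc Δ ^ 2 = σ₁ * σ₂ * σ₁ * (σ₂ * σ₁ * σ₂) := by rw [sq, ← σ₁_mul_σ₂_mul_σ₁, Δ]
    _ = σ₁ * (σ₂ * σ₁ * σ₂) * (σ₁ * σ₂) := by simp only [mul_assoc]
    _ = σ₁ * (σ₁ * σ₂ * σ₁) * (σ₁ * σ₂) := by rw [σ₁_mul_σ₂_mul_σ₁]
    _ = σ₁ ^ 2 * σ₂ * (σ₁ ^ 2 * σ₂) := by simp only [sq, mul_assoc]

theorem quasipositive_conj {s : B₃} (hs : s = σ₁ ∨ s = σ₂) (a : B₃) :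
    Quasipositive (a * s * a⁻¹) :=
  ⟨[(a, s)], by simpa using hs, by simp⟩

theorem Quasipositive.mul {β γ : B₃} (hβ : Quasipositive β) (hγ : Quasipositive γ) :
    Quasipositive (β * γ) := by
  obtain ⟨l, hl, rfl⟩ := hβ
  obtain ⟨m, hm, rfl⟩ := hγ
  refine ⟨l ++ m, fun p hp => ?_, by simp⟩
  rcases List.mem_append.mp hp with hp | hp
  exacts [hl p hp, hm p hp]

theorem quasipositive_insert_mul_inv {s t : B₃} (hs : s = σ₁ ∨ s = σ₂) (ht : t = σ₁ ∨ t = σ₂)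
    (x y : B₃) : Quasipositive (x * s * y * t * (x * y)⁻¹) := by
  have h : x * s * y * t * (x * y)⁻¹ = x * s * x⁻¹ * (x * y * t * (x * y)⁻¹) := by group
  rw [h]
  exact (quasipositive_conj hs x).mul (quasipositive_conj ht (x * y))

/-- The 3-braid σ₁²σ₂²σ₁²σ₂²·Δ⁻² is quasipositive. -/
theorem quasipositive_base_case :
    Quasipositive (σ₁ ^ 2 * σ₂ ^ 2 * σ₁ ^ 2 * σ₂ ^ 2 * Δ ^ (-2 : ℤ)) := by
  have h : σ₁ ^ 2 * σ₂ ^ 2 * σ₁ ^ 2 * σ₂ ^ 2 * Δ ^ (-2 : ℤ) =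
      σ₁ ^ 2 * σ₂ * σ₂ * (σ₁ ^ 2 * σ₂) * σ₂ * (σ₁ ^ 2 * σ₂ * (σ₁ ^ 2 * σ₂))⁻¹ := by
    rw [zpow_neg, zpow_two, ← sq, Δ_sq]
    simp only [sq, mul_assoc]
  rw [h]
  exact quasipositive_insert_mul_inv (.inr rfl) (.inr rfl) _ _
end

section
/- Uniqueness of the Garside normal form in the 3-strand braid group: if β₊ · Δ^m = β₊' · Δ^{m'} in B₃, where β₊, β₊' belong to the positive braid monoid B₃⁺ and both are Δ-free (neither admits a factorization u·Δ·v with u, v ∈ B₃⁺), then m = m' and β₊ = β₊'. (Stated in Section 2.1 of the paper, citing Orevkov: the Garside presentation β = β₊Δ^m is unique up to the Artin relation.) -/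
/-- An element of the positive braid monoid is Δ-free if it admits no factorization u·Δ·v
with u, v positive. -/
def DeltaFree (g : B₃) : Prop :=
  ¬ ∃ u v : B₃, u ∈ Submonoid.closure ({σ₁, σ₂} : Set B₃) ∧
      v ∈ Submonoid.closure ({σ₁, σ₂} : Set B₃) ∧ g = u * Δ * v

lemma Δ_mem_closure : Δ ∈ Submonoid.closure ({σ₁, σ₂} : Set B₃) := by
  have h₁ : σ₁ ∈ Submonoid.closure ({σ₁, σ₂} : Set B₃) := Submonoid.subset_closure (by simp)
  have h₂ : σ₂ ∈ Submonoid.closure ({σ₁, σ₂} : Set B₃) := Submonoid.subset_closure (by simp)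
  exact mul_mem (mul_mem h₁ h₂) h₁

lemma not_deltaFree_mul_Δ_zpow {β : B₃} (hβ : β ∈ Submonoid.closure ({σ₁, σ₂} : Set B₃))
    {k : ℤ} (hk : 0 < k) : ¬ DeltaFree (β * Δ ^ k) := by
  obtain ⟨n, rfl⟩ : ∃ n : ℕ, k = n + 1 := ⟨(k - 1).toNat, by omega⟩
  refine not_not.mpr ⟨β * Δ ^ n, 1, mul_mem hβ (pow_mem Δ_mem_closure n), one_mem _, ?_⟩
  rw [mul_one, zpow_add_one, zpow_natCast, mul_assoc]

lemma le_of_mul_Δ_zpow_eq {m m' : ℤ} {β β' : B₃}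
    (hβ' : β' ∈ Submonoid.closure ({σ₁, σ₂} : Set B₃)) (hfree : DeltaFree β)
    (h : β * Δ ^ m = β' * Δ ^ m') : m' ≤ m := by
  by_contra! hlt
  have hβ : β = β' * Δ ^ (m' - m) := by
    rw [eq_mul_inv_of_mul_eq h, zpow_sub, mul_assoc]
  exact not_deltaFree_mul_Δ_zpow hβ' (sub_pos.mpr hlt) (hβ ▸ hfree)

/-- Uniqueness of the Garside normal form in B₃. -/
theorem garside_normal_form_unique (m m' : ℤ) (βp βp' : B₃)
    (hβp : βp ∈ Submonoid.closure ({σ₁, σ₂} : Set B₃))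
    (hβp' : βp' ∈ Submonoid.closure ({σ₁, σ₂} : Set B₃))
    (hfree : DeltaFree βp) (hfree' : DeltaFree βp')
    (h : βp * Δ ^ m = βp' * Δ ^ m') :
    m = m' ∧ βp = βp' := by
  have hm : m = m' :=
    le_antisymm (le_of_mul_Δ_zpow_eq hβp hfree' h.symm) (le_of_mul_Δ_zpow_eq hβp' hfree h)
  subst hm
  exact ⟨rfl, mul_right_cancel h⟩
end

section
/- Conjugation does not increase the Δ-exponent of a 3-braid in the alternating normal form of Equation (1): let m be an integer and let β = (∏_{i=1}^{s} σ₁^{a_i}σ₂^{b_i})·Δ^m with s ≥ 1 and all a_i, b_i ≥ 2 in case m is even, or β = (∏_{i=1}^{s} σ₁^{a_i}σ₂^{b_i})·σ₁^{a_{s+1}}·Δ^m with s ≥ 0 and all a_i, b_i ≥ 2 in case m is odd. Then for every α ∈ B₃ and every integer m' such that α β α⁻¹ · Δ^{-m'} lies in the positive braid monoid B₃⁺, one has m' ≤ m. (This is the paper's claim in Section 2.1 that m in Equation (1) is greatest among all braid word presentations of the conjugacy class: conjugating β in the form of Equation (1) does not increase m.) -/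
/-!
Send B₃ onto ℤ/2 ∗ ℤ/3 ≅ B₃/⟨Δ²⟩ by σ₁ ↦ yx, σ₂ ↦ xy, so that Δ ↦ x, and weigh an element by
its reduced word, counting each letter y as 1, each y² as 2 and each x as 0. The weight is
subadditive, so a positive braid weighs at most its length, i.e. its exponent sum e, and an
element weighs at least the linear growth rate of the weights of the powers of any conjugate.
Up to conjugation by y, the image of β in the normal form (1) is the cyclically reduced word made
of one block (xy)ᵏ⁻²xy² per exponent k ≥ 2, so its n-th power weighs exactly n(e(β) - 3m). If
P = αβα⁻¹Δ^(-m') is positive, the image of P xᵐ' is conjugate to that of β and weighs at most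
e(P) = e(β) - 3m', hence m' ≤ m.
-/

namespace Monoid.CoprodI

variable {ι : Type*} {M : ι → Type*} [∀ i, Monoid (M i)] {w : ∀ i, M i → ℕ}

variable (w) in
def Word.weight (x : Word M) : ℕ := (x.toList.map fun l => w l.1 l.2).sum

variable [∀ i, DecidableEq (M i)]

lemma Word.weight_rcons {i : ι} (p : Word.Pair M i) :
    (Word.rcons p).weight w = (if p.head = 1 then 0 else w i p.head) + p.tail.weight w := by
  unfold Word.rcons
  split_ifs <;> simp [Word.weight]

variable [DecidableEq ι]

variable (w) in
def weight (g : CoprodI M) : ℕ := (Word.equiv g).weight w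

lemma weight_prod (x : Word M) : weight w x.prod = x.weight w :=
  congrArg _ (Word.equiv.apply_symm_apply x)

@[simp]
lemma weight_one : weight w (1 : CoprodI M) = 0 := weight_prod Word.empty

lemma NeWord.weight_prod_singleton {i : ι} (x : M i) (hx : x ≠ 1) :
    weight w (NeWord.singleton x hx).prod = w i x :=
  (weight_prod _).trans (add_zero _)

lemma NeWord.weight_prod_append {i j k l : ι} (x : NeWord M i j) (hjk : j ≠ k)
    (y : NeWord M k l) :
    weight w (x.append hjk y).prod = weight w x.prod + weight w y.prod := by
  simp only [NeWord.prod, weight_prod]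
  simp [Word.weight, NeWord.toWord]

lemma NeWord.weight_prod_pow {i j : ι} (x : NeWord M i j) (hji : j ≠ i) (n : ℕ) :
    weight w (x.prod ^ n) = n * weight w x.prod := by
  obtain _ | n := n
  · simp
  suffices ∃ y : NeWord M i j,
      y.prod = x.prod ^ (n + 1) ∧ weight w y.prod = (n + 1) * weight w x.prod by
    obtain ⟨y, hy, hyw⟩ := this
    rwa [← hy]
  induction n with
  | zero => exact ⟨x, by simp, by simp⟩
  | succ n ih =>
    obtain ⟨y, hy, hyw⟩ := ih
    refine ⟨y.append hji x, by rw [NeWord.append_prod, hy, ← pow_succ], ?_⟩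
    rw [NeWord.weight_prod_append, hyw]
    ring

lemma Word.weight_of_smul_le (hw : ∀ i (a b : M i), w i (a * b) ≤ w i a + w i b) {i : ι}
    (m : M i) (x : Word M) : (of m • x).weight w ≤ w i m + x.weight w := by
  conv_rhs => rw [← (Word.equivPair i).symm_apply_apply x, Word.equivPair_symm]
  rw [Word.of_smul_def, Word.weight_rcons, Word.weight_rcons]
  by_cases h : (Word.equivPair i x).head = 1
  · simp only [h, mul_one, if_true]
    split_ifs <;> omega
  · have := hw i m (Word.equivPair i x).head
    simp only [h, if_false]
    split_ifs <;> omega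

lemma Word.weight_prod_smul_le (hw : ∀ i (a b : M i), w i (a * b) ≤ w i a + w i b)
    (y x : Word M) : (y.prod • x).weight w ≤ y.weight w + x.weight w := by
  induction y using Word.consRecOn with
  | empty => simp [Word.weight]
  | cons i m y hmy hm ih =>
    rw [Word.prod_cons, mul_smul]
    have := Word.weight_of_smul_le hw m (y.prod • x)
    simp only [Word.weight, Word.cons_toList, List.map_cons, List.sum_cons] at this ih ⊢
    omega

lemma weight_mul_le (hw : ∀ i (a b : M i), w i (a * b) ≤ w i a + w i b) (g h : CoprodI M) :
    weight w (g * h) ≤ weight w g + weight w h := by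
  have := Word.weight_prod_smul_le hw (Word.equiv g) (Word.equiv h)
  rw [show (Word.equiv g).prod = g from Word.equiv.symm_apply_apply g] at this
  show ((g * h) • Word.empty).weight w ≤ _
  rwa [mul_smul]

lemma weight_of_le (hw : ∀ i (a b : M i), w i (a * b) ≤ w i a + w i b) {i : ι} (m : M i) :
    weight w (of m) ≤ w i m :=
  (Word.weight_of_smul_le hw m Word.empty).trans_eq (add_zero _)

end Monoid.CoprodI

lemma le_of_isConj_of_mul_le {G : Type*} [Group G] {f : G → ℕ}
    (hf : ∀ a b, f (a * b) ≤ f a + f b) {g u : G} {k : ℕ} (hg : ∀ n : ℕ, n * k ≤ f (g ^ n))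
    (hgu : IsConj g u) : k ≤ f u := by
  obtain ⟨c, rfl⟩ := isConj_iff.mp hgu.symm
  have hpow : ∀ n : ℕ, f (u ^ (n + 1)) ≤ (n + 1) * f u := fun n => by
    induction n with
    | zero => simp
    | succ n ih => rw [pow_succ]; linarith [hf (u ^ (n + 1)) u]
  set C := f c + f c⁻¹ with hC
  have hgrowth : (C + 1) * k ≤ C + (C + 1) * f u := calc
    (C + 1) * k ≤ f ((c * u * c⁻¹) ^ (C + 1)) := hg (C + 1)
    _ ≤ f c + f (u ^ (C + 1)) + f c⁻¹ := by
      rw [conj_pow]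
      linarith [hf (c * u ^ (C + 1)) c⁻¹, hf c (u ^ (C + 1))]
    _ ≤ C + (C + 1) * f u := by linarith [hpow C]
  by_contra! hk
  nlinarith

open Monoid CoprodI

abbrev CyclicFactor (i : Bool) : Type := Multiplicative (ZMod (cond i 2 3))

abbrev Γ : Type := CoprodI CyclicFactor

def X : Γ := of (i := true) (.ofAdd 1)

def Y : Γ := of (i := false) (.ofAdd 1)

def yWeight : ∀ i, CyclicFactor i → ℕ
  | true, _ => 0
  | false, a => (Multiplicative.toAdd a).val

local notation "wt" => weight yWeight

lemma yWeight_mul_le : ∀ i (a b : CyclicFactor i), yWeight i (a * b) ≤ yWeight i a + yWeight i b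
  | true, _, _ => le_rfl
  | false, a, b => ZMod.val_add_le (Multiplicative.toAdd a) (Multiplicative.toAdd b)

lemma weight_of_true (a : CyclicFactor true) : wt (of a) = 0 :=
  Nat.le_zero.mp (weight_of_le yWeight_mul_le a)

lemma weight_Y_le : wt Y ≤ 1 := weight_of_le yWeight_mul_le _

lemma X_mul_X : X * X = 1 := by
  rw [X, ← map_mul]; exact (map_eq_one_iff _ (of_injective _)).mpr (by decide)

lemma Y_mul_Y_mul_Y : Y * (Y * Y) = 1 := by
  rw [Y, ← map_mul, ← map_mul]; exact (map_eq_one_iff _ (of_injective _)).mpr (by decide)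

lemma X_mul_X_mul (g : Γ) : X * (X * g) = g := by rw [← mul_assoc, X_mul_X, one_mul]

lemma Y_mul_Y_mul_Y_mul (g : Γ) : Y * (Y * (Y * g)) = g := by
  rw [← mul_assoc, ← mul_assoc, mul_assoc Y Y Y, Y_mul_Y_mul_Y, one_mul]

def block : ℕ → NeWord CyclicFactor true false
  | 0 => (NeWord.singleton (i := true) (.ofAdd 1) (by decide)).append (by decide)
      (NeWord.singleton (i := false) (.ofAdd 2) (by decide))
  | k + 1 => ((NeWord.singleton (i := true) (.ofAdd 1) (by decide)).append (by decide)
      (NeWord.singleton (i := false) (.ofAdd 1) (by decide))).append (by decide) (block k)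

lemma block_prod (k : ℕ) : (block k).prod = (X * Y) ^ (k + 1) * Y := by
  induction k with
  | zero =>
    have hY2 : of (i := false) (.ofAdd 2) = Y * Y := by rw [Y, ← map_mul]; rfl
    simp only [block, NeWord.append_prod, NeWord.prod_singleton, hY2]
    rw [X]; group
  | succ k ih =>
    simp only [block, NeWord.append_prod, NeWord.prod_singleton, ih]
    rw [X, Y]; group

lemma weight_block_prod (k : ℕ) : wt (block k).prod = k + 2 := by
  induction k with
  | zero => rfl
  | succ k ih =>
    rw [block, NeWord.weight_prod_append, NeWord.weight_prod_append, ih,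
      NeWord.weight_prod_singleton, NeWord.weight_prod_singleton]
    change 0 + 1 + (k + 2) = k + 1 + 2
    omega

noncomputable def toΓ : B₃ →* Γ :=
  PresentedGroup.toGroup (f := ![Y * X, X * Y]) <| by
    rintro r rfl
    simp only [map_mul, map_inv, FreeGroup.lift_apply_of, Matrix.cons_val_zero,
      Matrix.cons_val_one, mul_inv_eq_one, mul_assoc, X_mul_X_mul, Y_mul_Y_mul_Y_mul,
      Y_mul_Y_mul_Y, mul_one]

noncomputable def exponentSum : B₃ →* Multiplicative ℤ :=
  PresentedGroup.toGroup (f := fun _ => .ofAdd 1) <| by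
    rintro r rfl
    simp only [map_mul, map_inv, FreeGroup.lift_apply_of, mul_inv_eq_one]

lemma toΓ_σ₁ : toΓ σ₁ = Y * X := PresentedGroup.toGroup.of _

lemma toΓ_σ₂ : toΓ σ₂ = X * Y := PresentedGroup.toGroup.of _

lemma toΓ_Δ : toΓ Δ = X := by
  rw [Δ, map_mul, map_mul, toΓ_σ₁, toΓ_σ₂]
  simp only [mul_assoc, X_mul_X_mul, Y_mul_Y_mul_Y_mul]

lemma toΓ_σ₁_pow_succ (k : ℕ) : toΓ (σ₁ ^ (k + 1)) = Y * (X * Y) ^ k * X := by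
  rw [map_pow, toΓ_σ₁]
  induction k with
  | zero => simp
  | succ k ih => rw [pow_succ, ih, pow_succ]; group

lemma exponentSum_σ₁ : exponentSum σ₁ = .ofAdd 1 := PresentedGroup.toGroup.of _

lemma exponentSum_σ₂ : exponentSum σ₂ = .ofAdd 1 := PresentedGroup.toGroup.of _

lemma exponentSum_Δ : exponentSum Δ = .ofAdd 3 := by
  rw [Δ, map_mul, map_mul, exponentSum_σ₁, exponentSum_σ₂]; rfl

lemma weight_toΓ_le_exponentSum {p : B₃} (hp : p ∈ Submonoid.closure ({σ₁, σ₂} : Set B₃)) :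
    (wt (toΓ p) : ℤ) ≤ Multiplicative.toAdd (exponentSum p) := by
  induction hp using Submonoid.closure_induction with
  | mem x hx =>
    have hX : wt X = 0 := weight_of_true _
    have hY := weight_Y_le
    rcases hx with rfl | rfl
    · have := weight_mul_le yWeight_mul_le Y X
      rw [toΓ_σ₁, exponentSum_σ₁, toAdd_ofAdd]
      omega
    · have := weight_mul_le yWeight_mul_le X Y
      rw [toΓ_σ₂, exponentSum_σ₂, toAdd_ofAdd]
      omega
  | one => simp
  | mul x y _ _ hx hy =>
    have := weight_mul_le yWeight_mul_le (toΓ x) (toΓ y)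
    rw [map_mul, map_mul, toAdd_mul]
    omega

/-- `n` plays the role of the Δ-exponent in (1); `ω` is cyclically reduced because it runs from
the ℤ/2 factor to the ℤ/3 factor. -/
def HasBlockWord (β : B₃) (n : ℤ) : Prop :=
  ∃ ω : NeWord CyclicFactor true false,
    Y⁻¹ * toΓ β * Y = ω.prod ∧ Multiplicative.toAdd (exponentSum β) = wt ω.prod + 3 * n

lemma HasBlockWord.mul {g h : B₃} {n n' : ℤ} (hg : HasBlockWord g n) (hh : HasBlockWord h n') :
    HasBlockWord (g * h) (n + n') := by
  obtain ⟨ω, hω, heω⟩ := hg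
  obtain ⟨ω', hω', heω'⟩ := hh
  refine ⟨ω.append (by decide) ω', ?_, ?_⟩
  · rw [NeWord.append_prod, ← hω, ← hω', map_mul]
    group
  · rw [map_mul, toAdd_mul, heω, heω', NeWord.weight_prod_append]
    push_cast
    ring

lemma HasBlockWord.mul_Δ_zpow {g : B₃} {n m : ℤ} (hg : HasBlockWord g n) (hm : Even m) :
    HasBlockWord (g * Δ ^ m) (n + m) := by
  obtain ⟨ω, hω, heω⟩ := hg
  have hXm : X ^ m = 1 := by
    obtain ⟨k, rfl⟩ := hm
    rw [← two_mul, zpow_mul, zpow_two, X_mul_X, one_zpow]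
  refine ⟨ω, ?_, ?_⟩
  · rw [map_mul, map_zpow, toΓ_Δ, hXm, mul_one, hω]
  · rw [map_mul, map_zpow, exponentSum_Δ, toAdd_mul, toAdd_zpow, heω, toAdd_ofAdd, smul_eq_mul]
    ring

lemma HasBlockWord.list_prod_mul {g : B₃} {n : ℤ} (hg : HasBlockWord g n) {l : List B₃}
    (hl : ∀ x ∈ l, HasBlockWord x 0) : HasBlockWord (l.prod * g) n := by
  induction l with
  | nil => simpa using hg
  | cons x l ih =>
    rw [List.prod_cons, mul_assoc]
    simpa using (hl x List.mem_cons_self).mul (ih fun y hy => hl y (List.mem_cons_of_mem x hy))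

lemma hasBlockWord_σ₁_pow_mul_σ₂_pow {a b : ℕ} (ha : 2 ≤ a) (hb : 2 ≤ b) :
    HasBlockWord (σ₁ ^ a * σ₂ ^ b) 0 := by
  obtain ⟨k, rfl⟩ := Nat.exists_eq_add_of_le' ha
  obtain ⟨l, rfl⟩ := Nat.exists_eq_add_of_le' hb
  refine ⟨(block k).append (by decide) (block l), ?_, ?_⟩
  · rw [NeWord.append_prod, block_prod, block_prod, map_mul, map_pow toΓ σ₂, toΓ_σ₂,
      show k + 2 = (k + 1) + 1 by ring, toΓ_σ₁_pow_succ, pow_succ' _ (l + 1)]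
    simp only [mul_assoc, X_mul_X_mul, inv_mul_cancel_left]
  · rw [NeWord.weight_prod_append, weight_block_prod, weight_block_prod, map_mul, map_pow,
      map_pow, exponentSum_σ₁, exponentSum_σ₂, toAdd_mul, toAdd_pow, toAdd_pow, toAdd_ofAdd,
      nsmul_eq_mul, nsmul_eq_mul]
    push_cast
    ring

lemma hasBlockWord_σ₁_pow_mul_Δ {a : ℕ} (ha : 2 ≤ a) : HasBlockWord (σ₁ ^ a * Δ) 1 := by
  obtain ⟨k, rfl⟩ := Nat.exists_eq_add_of_le' ha
  refine ⟨block k, ?_, ?_⟩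
  · rw [block_prod, map_mul, toΓ_Δ, show k + 2 = (k + 1) + 1 by ring, toΓ_σ₁_pow_succ]
    simp only [mul_assoc, X_mul_X_mul, inv_mul_cancel_left]
  · rw [weight_block_prod, map_mul, map_pow, exponentSum_Δ, exponentSum_σ₁, toAdd_mul, toAdd_pow,
      toAdd_ofAdd, toAdd_ofAdd, nsmul_eq_mul]
    push_cast
    ring

lemma HasBlockWord.ofFn_prod_mul {g : B₃} {n : ℤ} (hg : HasBlockWord g n) {s : ℕ}
    {a b : Fin s → ℕ} (ha : ∀ i, 2 ≤ a i) (hb : ∀ i, 2 ≤ b i) :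
    HasBlockWord ((List.ofFn fun i => σ₁ ^ a i * σ₂ ^ b i).prod * g) n :=
  hg.list_prod_mul fun _ hx => by
    obtain ⟨i, rfl⟩ := List.mem_ofFn.mp hx
    exact hasBlockWord_σ₁_pow_mul_σ₂_pow (ha i) (hb i)

lemma hasBlockWord_of_even {m : ℤ} (hm : Even m) {s : ℕ} (hs : 1 ≤ s) {a b : Fin s → ℕ}
    (ha : ∀ i, 2 ≤ a i) (hb : ∀ i, 2 ≤ b i) :
    HasBlockWord ((List.ofFn fun i => σ₁ ^ a i * σ₂ ^ b i).prod * Δ ^ m) m := by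
  obtain ⟨t, rfl⟩ := Nat.exists_eq_add_of_le' hs
  rw [List.ofFn_succ', List.prod_concat, mul_assoc]
  have hlast := (hasBlockWord_σ₁_pow_mul_σ₂_pow (ha (Fin.last t)) (hb (Fin.last t))).mul_Δ_zpow hm
  rw [zero_add] at hlast
  exact hlast.ofFn_prod_mul (fun _ => ha _) (fun _ => hb _)

lemma hasBlockWord_of_odd {m : ℤ} (hm : Odd m) {s : ℕ} {a b : Fin s → ℕ} {a' : ℕ}
    (ha : ∀ i, 2 ≤ a i) (hb : ∀ i, 2 ≤ b i) (ha' : 2 ≤ a') :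
    HasBlockWord ((List.ofFn fun i => σ₁ ^ a i * σ₂ ^ b i).prod * σ₁ ^ a' * Δ ^ m) m := by
  have hlast := (hasBlockWord_σ₁_pow_mul_Δ ha').mul_Δ_zpow (even_sub_one.mpr hm)
  rw [add_sub_cancel, mul_assoc, ← zpow_one_add, add_sub_cancel] at hlast
  rw [mul_assoc]
  exact hlast.ofFn_prod_mul ha hb

/-- Conjugation does not increase the Δ-exponent of a 3-braid in the alternating normal
form of Equation (1). -/
theorem conjugation_does_not_increase_exponent (m : ℤ) (β : B₃)
    (hβ :
      (Even m ∧ ∃ (s : ℕ) (a b : Fin s → ℕ), 1 ≤ s ∧ (∀ i, 2 ≤ a i) ∧ (∀ i, 2 ≤ b i) ∧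
        β = (List.ofFn fun i => σ₁ ^ a i * σ₂ ^ b i).prod * Δ ^ m) ∨
      (Odd m ∧ ∃ (s : ℕ) (a b : Fin s → ℕ) (a' : ℕ), (∀ i, 2 ≤ a i) ∧ (∀ i, 2 ≤ b i) ∧
        2 ≤ a' ∧
        β = (List.ofFn fun i => σ₁ ^ a i * σ₂ ^ b i).prod * σ₁ ^ a' * Δ ^ m))
    (α : B₃) (m' : ℤ)
    (h : α * β * α⁻¹ * Δ ^ (-m') ∈ Submonoid.closure ({σ₁, σ₂} : Set B₃)) :
    m' ≤ m := by
  obtain ⟨ω, hω, heω⟩ : HasBlockWord β m := by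
    rcases hβ with ⟨hm, s, a, b, hs, ha, hb, rfl⟩ | ⟨hm, s, a, b, a', ha, hb, ha', rfl⟩
    · exact hasBlockWord_of_even hm hs ha hb
    · exact hasBlockWord_of_odd hm ha hb ha'
  set P := α * β * α⁻¹ * Δ ^ (-m')
  have hconj : IsConj ω.prod (toΓ P * X ^ m') := by
    refine isConj_iff.mpr ⟨toΓ α * Y, ?_⟩
    simp only [P, ← hω, map_mul, map_inv, map_zpow, toΓ_Δ]
    group
  have hstable : wt ω.prod ≤ wt (toΓ P * X ^ m') :=
    le_of_isConj_of_mul_le (weight_mul_le yWeight_mul_le)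
      (fun n => (ω.weight_prod_pow (by decide) n).ge) hconj
  have hP := weight_toΓ_le_exponentSum h
  have hPX := weight_mul_le yWeight_mul_le (toΓ P) (X ^ m')
  have hX : wt (X ^ m') = 0 := by rw [X, ← map_zpow, weight_of_true]
  have heP : Multiplicative.toAdd (exponentSum P) =
      Multiplicative.toAdd (exponentSum β) - 3 * m' := by
    simp only [P, map_mul, map_inv, map_zpow, exponentSum_Δ, toAdd_mul, toAdd_inv, toAdd_zpow,
      toAdd_ofAdd, smul_eq_mul]
    ring
  omega
end

section
/- Block-count bound for quasipositive 3-braids with Δ-exponent −2: let s ≥ 1 and let a₁,…,a_s, b₁,…,b_s be integers with every a_i ≥ 2 and every b_i ≥ 2, and set β = (∏_{i=1}^{s} σ₁^{a_i}σ₂^{b_i})·Δ⁻². If β is quasipositive, then s ≥ 2, i.e., the number r = 2s of syllable blocks of the positive part satisfies r ≥ 4. (This is the claim 'according to Orevkov's criterion of quasipositivity, r ≥ 4' in the paper's proof of Proposition 4.1.) -/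
/-!
`B₃` acts on the universal cover of the real projective line by lifting its action through
`SL₂(ℤ)`: `σ₁` acts as the lift of `t ↦ t + 1`, `Δ` as a lift `ρ` of the quarter turn
`t ↦ -1/t`, and `σ₂` as `ρ σ₁ ρ⁻¹`. Both generators move every point weakly upwards, and as the
action is by order automorphisms, so does every conjugate of them and hence every quasipositive
braid. But `Δ²` moves every point up by exactly one sheet; `σ₂` fixes the lifts of the horizontal
line and `σ₁` moves them within their sheet, so `σ₁^a σ₂^b Δ⁻²` moves such a lift strictly
downwards.
-/

section OrderAction

variable {α : Type*} [Preorder α]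

theorem OrderIso.le_conj_apply {f : α ≃o α} (hf : ∀ x, x ≤ f x) (g : α ≃o α) (x : α) :
    x ≤ (g * f * g⁻¹) x := by
  simpa only [RelIso.mul_apply, RelIso.apply_inv_self] using g.monotone (hf (g⁻¹ x))

theorem Quasipositive.le_apply {φ : B₃ →* α ≃o α} (h₁ : ∀ x, x ≤ φ σ₁ x)
    (h₂ : ∀ x, x ≤ φ σ₂ x) {β : B₃} (hβ : Quasipositive β) (x : α) : x ≤ φ β x := by
  obtain ⟨l, hl, rfl⟩ := hβ
  induction l generalizing x with
  | nil => simp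
  | cons p l ih =>
    have hp : ∀ y, y ≤ φ p.2 y := by
      rcases hl p List.mem_cons_self with h | h <;> rw [h] <;> assumption
    rw [List.map_cons, List.prod_cons, map_mul, RelIso.mul_apply]
    refine (ih x fun q hq => hl q (List.mem_cons_of_mem _ hq)).trans ?_
    simpa only [map_mul, map_inv] using OrderIso.le_conj_apply hp (φ p.1) _

end OrderAction

section BraidHom

variable {G : Type*} [Group G]

theorem mul_conj_mul_eq {u ρ : G} (h : u * ρ * u = ρ * u⁻¹ * ρ) :
    u * (ρ * u * ρ⁻¹) * u = ρ :=
  calc u * (ρ * u * ρ⁻¹) * u = u * ρ * u * ρ⁻¹ * u := by group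
    _ = ρ := by rw [h]; group

theorem conj_mul_conj_eq {u ρ : G} (h : u * ρ * u = ρ * u⁻¹ * ρ) :
    ρ * u * ρ⁻¹ * u * (ρ * u * ρ⁻¹) = ρ :=
  calc ρ * u * ρ⁻¹ * u * (ρ * u * ρ⁻¹) = ρ * u * ρ⁻¹ * (u * ρ * u) * ρ⁻¹ := by group
    _ = ρ := by rw [h]; group

def braidHom (u v : G) (h : u * v * u = v * u * v) : B₃ →* G :=
  PresentedGroup.toGroup (f := ![u, v]) <| by simp [braidRel, h]

variable {u v : G} (h : u * v * u = v * u * v)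

theorem braidHom_σ₁ : braidHom u v h σ₁ = u := PresentedGroup.toGroup.of _

theorem braidHom_σ₂ : braidHom u v h σ₂ = v := PresentedGroup.toGroup.of _

theorem braidHom_Δ : braidHom u v h Δ = u * v * u := by
  rw [Δ, map_mul, map_mul, braidHom_σ₁, braidHom_σ₂]

end BraidHom

theorem Prod.Lex.strictMono_of_fiber_mem_Ico {β : Type*} [Preorder β] {f : ℤ ×ₗ β → ℤ ×ₗ β}
    (c : β) (hf : ∀ k x, f (toLex (k, x)) ∈ Set.Ico (toLex (k, c)) (toLex (k + 1, c)))
    (hf_mono : ∀ k, StrictMono fun x => f (toLex (k, x))) : StrictMono f := by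
  rintro ⟨k, x⟩ ⟨l, y⟩ hlt
  rcases Prod.Lex.toLex_lt_toLex.mp hlt with hkl | ⟨rfl, hxy⟩
  · calc f (toLex (k, x)) < toLex (k + 1, c) := (hf k x).2
      _ ≤ toLex (l, c) := Prod.Lex.toLex_le_toLex.mpr <|
          (Int.add_one_le_of_lt hkl).lt_or_eq.imp id fun h => ⟨h, le_rfl⟩
      _ ≤ f (toLex (l, y)) := (hf l y).1
  · exact hf_mono k hxy

namespace ProjectiveLine

/-- `toLex (k, t)` is the line of slope `t` in the `k`-th sheet of the universal cover of `ℝP¹`,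
each sheet starting with the vertical line `t = ⊥`. Rational slopes suffice, as `SL₂(ℤ)` preserves
them. -/
abbrev Cover := ℤ ×ₗ WithBot ℚ

noncomputable def translate : Cover ≃o Cover :=
  Prod.Lex.prodLexCongr (.refl ℤ) (OrderIso.addRight (1 : ℚ)).withBotCongr

@[simp]
theorem translate_apply (k : ℤ) (x : WithBot ℚ) :
    translate (toLex (k, x)) = toLex (k, x.map (· + 1)) :=
  rfl

theorem le_translate (p : Cover) : p ≤ translate p := by
  obtain ⟨k, _ | t⟩ := p
  · rfl
  · exact Prod.Lex.toLex_le_toLex.mpr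
      (.inr ⟨rfl, WithBot.coe_le_coe.mpr (le_add_of_nonneg_right zero_le_one)⟩)

theorem translate_pow_apply (n : ℕ) (k : ℤ) (x : WithBot ℚ) :
    (translate ^ n) (toLex (k, x)) = toLex (k, x.map (· + (n : ℚ))) := by
  induction n with
  | zero => cases x <;> simp
  | succ n ih =>
    rw [pow_succ', RelIso.mul_apply, ih, translate_apply]
    cases x
    · rfl
    · simp only [WithBot.map_coe, Nat.cast_succ, add_assoc]

theorem translate_inv_apply (k : ℤ) (x : WithBot ℚ) :
    translate⁻¹ (toLex (k, x)) = toLex (k, x.map (· - 1)) := by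
  refine translate.symm_apply_eq.mpr ?_
  cases x <;> simp

def rotateAt (k : ℤ) : WithBot ℚ → Cover
  | ⊥ => toLex (k, 0)
  | (t : ℚ) => if t < 0 then toLex (k, ↑((-t)⁻¹)) else if t = 0 then toLex (k + 1, ⊥)
      else toLex (k + 1, ↑((-t)⁻¹))

theorem rotateAt_bot (k : ℤ) : rotateAt k ⊥ = toLex (k, 0) := rfl

theorem rotateAt_of_neg (k : ℤ) {t : ℚ} (ht : t < 0) :
    rotateAt k t = toLex (k, ↑((-t)⁻¹)) := by
  simp [rotateAt, ht]

theorem rotateAt_zero (k : ℤ) : rotateAt k 0 = toLex (k + 1, ⊥) := by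
  simp [rotateAt]

theorem rotateAt_of_pos (k : ℤ) {t : ℚ} (ht : 0 < t) :
    rotateAt k t = toLex (k + 1, ↑((-t)⁻¹)) := by
  simp [rotateAt, ht.not_gt, ht.ne']

theorem rotateAt_mem_Ico (k : ℤ) (x : WithBot ℚ) :
    rotateAt k x ∈ Set.Ico (toLex (k, 0)) (toLex (k + 1, 0)) := by
  induction x using WithBot.recBotCoe with
  | bot => simp [rotateAt_bot, Prod.Lex.toLex_lt_toLex]
  | coe t =>
    rcases lt_trichotomy t 0 with ht | rfl | ht
    · simp [rotateAt_of_neg k ht, Prod.Lex.toLex_lt_toLex, Prod.Lex.toLex_le_toLex, ht.le]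
    · simp [rotateAt_zero, Prod.Lex.toLex_lt_toLex, Prod.Lex.toLex_le_toLex]
    · simp [rotateAt_of_pos k ht, Prod.Lex.toLex_lt_toLex, Prod.Lex.toLex_le_toLex, ht]

theorem rotateAt_strictMono (k : ℤ) : StrictMono (rotateAt k) := by
  refine WithBot.strictMono_iff.mpr ⟨fun s t hst => ?_, fun t => ?_⟩
  · rcases lt_trichotomy s 0 with hs | rfl | hs <;> rcases lt_trichotomy t 0 with ht | rfl | ht <;>
      first
      | (exfalso; linarith)
      | simp [rotateAt_of_neg, rotateAt_of_pos, rotateAt_zero, Prod.Lex.toLex_lt_toLex,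
          inv_lt_inv_of_neg, inv_lt_inv₀, *]
  · rcases lt_trichotomy t 0 with ht | rfl | ht <;>
      simp [rotateAt_bot, rotateAt_of_neg, rotateAt_of_pos, rotateAt_zero,
        Prod.Lex.toLex_lt_toLex, *]

def rotateFun (p : Cover) : Cover := rotateAt (ofLex p).1 (ofLex p).2

theorem rotateFun_strictMono : StrictMono rotateFun :=
  Prod.Lex.strictMono_of_fiber_mem_Ico 0 rotateAt_mem_Ico rotateAt_strictMono

theorem rotateFun_rotateAt (k : ℤ) (x : WithBot ℚ) :
    rotateFun (rotateAt k x) = toLex (k + 1, x) := by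
  induction x using WithBot.recBotCoe with
  | bot => exact rotateAt_zero k
  | coe t =>
    rcases lt_trichotomy t 0 with ht | rfl | ht
    · simp [rotateFun, rotateAt_of_neg k ht, rotateAt_of_pos, ht]
    · simp [rotateFun, rotateAt_zero, rotateAt_bot]
    · simp [rotateFun, rotateAt_of_pos k ht, rotateAt_of_neg, ht]

noncomputable def rotate : Cover ≃o Cover :=
  rotateFun_strictMono.orderIsoOfRightInverse rotateFun
    (fun p => rotateAt ((ofLex p).1 - 1) (ofLex p).2) fun p => by simp [rotateFun_rotateAt]

theorem rotate_apply (k : ℤ) (x : WithBot ℚ) : rotate (toLex (k, x)) = rotateAt k x := rfl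

theorem rotate_sq_apply (k : ℤ) (x : WithBot ℚ) :
    (rotate ^ 2) (toLex (k, x)) = toLex (k + 1, x) :=
  rotateFun_rotateAt k x

theorem translate_mul_rotate_mul_translate :
    translate * rotate * translate = rotate * translate⁻¹ * rotate := by
  ext p
  obtain ⟨⟨k, x⟩, rfl⟩ := toLex.surjective p
  simp only [RelIso.mul_apply, rotate_apply, translate_apply]
  induction x using WithBot.recBotCoe with
  | bot => simp [rotateAt_bot, translate_inv_apply, rotate_apply, rotateAt_of_neg]
  | coe t =>
    have key (ht : t ≠ 0) (ht' : t + 1 ≠ 0) : (-(t + 1))⁻¹ + 1 = (-((-t)⁻¹ - 1))⁻¹ := by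
      rw [show -((-t)⁻¹ - 1) = (t + 1) / t by field_simp; ring, inv_div]
      field_simp
      ring
    rw [WithBot.map_coe]
    rcases lt_trichotomy t (-1) with ht | rfl | ht
    · have hu : (-t)⁻¹ - 1 < 0 := by rw [sub_neg, inv_lt_one₀ (by linarith)]; linarith
      rw [rotateAt_of_neg k (by linarith : t + 1 < 0), translate_apply, WithBot.map_coe,
        rotateAt_of_neg k (by linarith : t < 0), translate_inv_apply, WithBot.map_coe,
        rotate_apply, rotateAt_of_neg k hu, key (by linarith) (by linarith)]
    · norm_num [rotateAt_zero, rotateAt_of_neg, translate_inv_apply, rotate_apply]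
    rcases lt_trichotomy t 0 with ht₀ | rfl | ht₀
    · have hu : 0 < (-t)⁻¹ - 1 := by rw [sub_pos, one_lt_inv₀ (by linarith)]; linarith
      rw [rotateAt_of_pos k (by linarith : 0 < t + 1), translate_apply, WithBot.map_coe,
        rotateAt_of_neg k ht₀, translate_inv_apply, WithBot.map_coe, rotate_apply,
        rotateAt_of_pos k hu, key ht₀.ne (by linarith)]
    · rw [zero_add, rotateAt_of_pos k one_pos]
      norm_num [rotateAt_zero, translate_inv_apply, rotate_apply, rotateAt_bot]
    · have hu : (-t)⁻¹ - 1 < 0 := by linarith [inv_lt_zero.mpr (neg_lt_zero.mpr ht₀)]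
      rw [rotateAt_of_pos k (by linarith : 0 < t + 1), translate_apply, WithBot.map_coe,
        rotateAt_of_pos k ht₀, translate_inv_apply, WithBot.map_coe, rotate_apply,
        rotateAt_of_neg _ hu, key ht₀.ne' (by linarith)]

noncomputable def action : B₃ →* Cover ≃o Cover :=
  braidHom translate (rotate * translate * rotate⁻¹) <|
    (mul_conj_mul_eq translate_mul_rotate_mul_translate).trans
      (conj_mul_conj_eq translate_mul_rotate_mul_translate).symm

theorem action_σ₁ : action σ₁ = translate := braidHom_σ₁ _

theorem action_σ₂ : action σ₂ = rotate * translate * rotate⁻¹ := braidHom_σ₂ _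

theorem action_Δ : action Δ = rotate :=
  (braidHom_Δ _).trans (mul_conj_mul_eq translate_mul_rotate_mul_translate)

theorem le_action_apply_of_quasipositive {β : B₃} (hβ : Quasipositive β) (p : Cover) :
    p ≤ action β p :=
  hβ.le_apply (fun x => action_σ₁ ▸ le_translate x)
    (fun x => action_σ₂ ▸ OrderIso.le_conj_apply le_translate rotate x) p

end ProjectiveLine

open ProjectiveLine in
theorem not_quasipositive_σ₁_pow_mul_σ₂_pow_mul_Δ_zpow_neg_two (a b : ℕ) :
    ¬ Quasipositive (σ₁ ^ a * σ₂ ^ b * Δ ^ (-2 : ℤ)) := by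
  intro h
  have hΔ : action (Δ ^ (-2 : ℤ)) (toLex (0, 0)) = toLex (-1, 0) := by
    rw [map_zpow, action_Δ, zpow_neg, zpow_ofNat]
    refine (rotate ^ 2).symm_apply_eq.mpr ?_
    norm_num [rotate_sq_apply]
  have hσ₂ : action (σ₂ ^ b) (toLex (-1, 0)) = toLex (-1, 0) := by
    have hrotate : rotate⁻¹ (toLex (-1, 0)) = toLex (-1, ⊥) :=
      rotate.symm_apply_eq.mpr (rotateAt_bot _).symm
    rw [map_pow, action_σ₂, conj_pow, RelIso.mul_apply, RelIso.mul_apply, hrotate,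
      translate_pow_apply]
    rfl
  have hσ₁ : action (σ₁ ^ a) (toLex (-1, 0)) = toLex (-1, ((a : ℚ) : WithBot ℚ)) := by
    rw [map_pow, action_σ₁, translate_pow_apply]
    simp
  have hle := le_action_apply_of_quasipositive h (toLex (0, 0))
  rw [map_mul, map_mul, RelIso.mul_apply, RelIso.mul_apply, hΔ, hσ₂, hσ₁] at hle
  simp [Prod.Lex.toLex_le_toLex] at hle

theorem block_count_bound_general (s : ℕ) (a b : Fin s → ℕ)
    (hqp : Quasipositive
      ((List.ofFn fun i => σ₁ ^ a i * σ₂ ^ b i).prod * Δ ^ (-2 : ℤ))) :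
    2 ≤ s := by
  by_contra! hs
  interval_cases s
  · exact not_quasipositive_σ₁_pow_mul_σ₂_pow_mul_Δ_zpow_neg_two 0 0 (by simpa using hqp)
  · exact not_quasipositive_σ₁_pow_mul_σ₂_pow_mul_Δ_zpow_neg_two (a 0) (b 0) (by simpa using hqp)

/-- Block-count bound for quasipositive 3-braids with Δ-exponent −2: if
(∏ᵢ σ₁^{aᵢ} σ₂^{bᵢ})·Δ⁻² with all aᵢ, bᵢ ≥ 2 is quasipositive, then s ≥ 2. -/
theorem block_count_bound (s : ℕ) (hs : 1 ≤ s) (a b : Fin s → ℕ)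
    (ha : ∀ i, 2 ≤ a i) (hb : ∀ i, 2 ≤ b i)
    (hqp : Quasipositive
      ((List.ofFn fun i => σ₁ ^ a i * σ₂ ^ b i).prod * Δ ^ (-2 : ℤ))) :
    2 ≤ s :=
  block_count_bound_general s a b hqp
end
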